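/- Let G=(V,E) be a 3-manifold and let ψ:V→ℂ with Re ψ and Im ψ nowhere zero on V. Then the level set {ψ=0} is either the empty graph or a disjoint union of cyclic graphs C_n with n≥4. -/

import Mathlib

open scoped Classical

/-- A finite simple graph: a finite vertex set together with a symmetric, irreflexive
adjacency relation supported on the vertex set. -/
structure FGraph (V : Type) where
  verts : Finset V
  Adj : V → V → Prop
  symm : ∀ {a b}, Adj a b → Adj b a
  loopless : ∀ a, ¬ Adj a a
  mem_of_adj : ∀ {a b}, Adj a b → a ∈ verts

namespace FGraph

variable {V W : Type}

/-- The subgraph induced on the vertices satisfying `P`. -/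
noncomputable def induce (G : FGraph V) (P : V → Prop) : FGraph V where
  verts := G.verts.filter P
  Adj a b := G.Adj a b ∧ P a ∧ P b
  symm h := ⟨G.symm h.1, h.2.2, h.2.1⟩
  loopless a h := G.loopless a h.1
  mem_of_adj h := Finset.mem_filter.mpr ⟨G.mem_of_adj h.1, h.2.1⟩

/-- The unit sphere of a vertex: the subgraph induced on its neighbors. -/
noncomputable def unitSphere (G : FGraph V) (v : V) : FGraph V :=
  G.induce (fun w => G.Adj v w)

/-- The graph with the vertex `v` (and its edges) removed. -/
noncomputable def erase (G : FGraph V) (v : V) : FGraph V :=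
  G.induce (fun w => w ≠ v)

/-- Inductive definition of contractibility: the one-point graph is contractible, and a
graph is contractible if some vertex has a contractible unit sphere and contractible
complement. -/
inductive Contractible : FGraph V → Prop
  | single (G : FGraph V) (v : V) (h : G.verts = {v}) : Contractible G
  | step (G : FGraph V) (v : V) (hv : v ∈ G.verts)
      (h1 : Contractible (G.unitSphere v)) (h2 : Contractible (G.erase v)) :
      Contractible G

mutual
  /-- `G` is a `d`-sphere: the empty graph is the `(-1)`-sphere, and a `d`-manifold is a
  `d`-sphere if removing some vertex renders it contractible. -/
  inductive IsSphere : ℤ → FGraph V → Prop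
    | empty (G : FGraph V) (h : G.verts = ∅) : IsSphere (-1) G
    | punctured (d : ℤ) (G : FGraph V) (hm : IsManifold d G) (v : V) (hv : v ∈ G.verts)
        (hc : Contractible (G.erase v)) : IsSphere d G
  /-- For `d ≥ 0`, `G` is a `d`-manifold iff every unit sphere is a `(d-1)`-sphere. -/
  inductive IsManifold : ℤ → FGraph V → Prop
    | intro (d : ℤ) (hd : 0 ≤ d) (G : FGraph V)
        (h : ∀ v ∈ G.verts, IsSphere (d - 1) (G.unitSphere v)) : IsManifold d G
end

/-- A simplex of `G`: the vertex set of a complete subgraph. -/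
def IsSimplex (G : FGraph V) (x : Finset V) : Prop :=
  x.Nonempty ∧ ↑x ⊆ G.verts ∧ ∀ a ∈ x, ∀ b ∈ x, a ≠ b → G.Adj a b

/-- The Barycentric refinement: vertices are the simplices of `G`, two being adjacent iff
one is strictly contained in the other. -/
noncomputable def barycentric (G : FGraph V) : FGraph (Finset V) where
  verts := G.verts.powerset.filter (fun x => G.IsSimplex x)
  Adj x y := G.IsSimplex x ∧ G.IsSimplex y ∧ (x ⊂ y ∨ y ⊂ x)
  symm h := ⟨h.2.1, h.1, h.2.2.symm⟩
  loopless x h := by rcases h.2.2 with h' | h' <;> exact (ssubset_irrefl x h')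
  mem_of_adj h := Finset.mem_filter.mpr ⟨Finset.mem_powerset.mpr h.1.2.1, h.1⟩

/-- Number of simplices of `G` with exactly `j` vertices (so `numSimplices G (k+1)` is
the `f`-vector entry `f_k(G)`). -/
noncomputable def numSimplices (G : FGraph V) (j : ℕ) : ℕ :=
  (G.verts.powerset.filter (fun x => G.IsSimplex x ∧ x.card = j)).card

/-- Euler characteristic `χ(G) = Σ_{k ≥ 0} (-1)^k f_k(G)`, where `f_k` counts the
simplices with `k+1` vertices. -/
noncomputable def euler (G : FGraph V) : ℤ :=
  ∑ k ∈ Finset.range G.verts.card, (-1 : ℤ) ^ k * G.numSimplices (k + 1)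

/-- The level set `{f = c}`: the subgraph of the Barycentric refinement induced by the
simplices on which `f - c` changes sign. -/
noncomputable def levelSet (G : FGraph V) (f : V → ℝ) (c : ℝ) : FGraph (Finset V) :=
  G.barycentric.induce (fun x => (∃ a ∈ x, f a - c < 0) ∧ (∃ b ∈ x, 0 < f b - c))

/-- Graph isomorphism. -/
def Iso (G : FGraph V) (H : FGraph W) : Prop :=
  ∃ φ : V → W, Set.BijOn φ ↑G.verts ↑H.verts ∧
    ∀ a ∈ G.verts, ∀ b ∈ G.verts, (G.Adj a b ↔ H.Adj (φ a) (φ b))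

/-- Zykov join of two graphs: disjoint union plus all edges between the two parts. -/
noncomputable def join (G : FGraph V) (H : FGraph W) : FGraph (V ⊕ W) where
  verts := G.verts.disjSum H.verts
  Adj a b :=
    match a, b with
    | .inl a, .inl b => G.Adj a b
    | .inr a, .inr b => H.Adj a b
    | .inl a, .inr b => a ∈ G.verts ∧ b ∈ H.verts
    | .inr a, .inl b => b ∈ G.verts ∧ a ∈ H.verts
  symm {a b} h := by
    cases a <;> cases b <;> simp_all <;> first | exact G.symm h | exact H.symm h
  loopless a h := by
    cases a <;> simp_all <;> first | exact G.loopless _ h | exact H.loopless _ h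
  mem_of_adj {a b} h := by
    cases a <;> cases b <;> simp_all [Finset.mem_disjSum] <;>
      first | exact G.mem_of_adj h | exact H.mem_of_adj h

/-- Union of two graphs on the same vertex type. -/
noncomputable def union (G H : FGraph V) : FGraph V where
  verts := G.verts ∪ H.verts
  Adj a b := G.Adj a b ∨ H.Adj a b
  symm h := h.imp G.symm H.symm
  loopless a h := h.elim (G.loopless a) (H.loopless a)
  mem_of_adj h :=
    h.elim (fun h' => Finset.mem_union_left _ (G.mem_of_adj h'))
      (fun h' => Finset.mem_union_right _ (H.mem_of_adj h'))

/-- A `d`-ball: a graph of the form `S - v` for a `d`-sphere `S` and a vertex `v` of `S`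
(up to graph isomorphism). -/
def IsBall (d : ℤ) (H : FGraph W) : Prop :=
  ∃ (S : FGraph ℕ) (v : ℕ), IsSphere d S ∧ v ∈ S.verts ∧ Iso H (S.erase v)

/-- A `d`-manifold with boundary: every unit sphere is a `(d-1)`-sphere or a `(d-1)`-ball. -/
def IsManifoldWithBoundary (d : ℤ) (G : FGraph V) : Prop :=
  ∀ v ∈ G.verts, IsSphere (d - 1) (G.unitSphere v) ∨ IsBall (d - 1) (G.unitSphere v)

/-- The cyclic graph `C_n` on the vertex set `Fin n`. -/
def cycleGraph (n : ℕ) : FGraph (Fin n) where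
  verts := Finset.univ
  Adj a b := a ≠ b ∧ ((a.val + 1) % n = b.val ∨ (b.val + 1) % n = a.val)
  symm h := ⟨h.1.symm, h.2.symm⟩
  loopless a h := h.1 rfl
  mem_of_adj _ := Finset.mem_univ _

/-- `G` is a disjoint union of cyclic graphs `C_n` with `n ≥ 4`: the vertex set splits
into pairwise disjoint pieces, edges never cross between pieces, and each piece induces
a graph isomorphic to a `C_n` with `n ≥ 4`. -/
def IsDisjointUnionOfCycles (G : FGraph V) : Prop :=
  ∃ P : Finset (Finset V),
    (∀ S ∈ P, ↑S ⊆ G.verts) ∧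
    (∀ S ∈ P, ∀ T ∈ P, S ≠ T → Disjoint S T) ∧
    (∀ v ∈ G.verts, ∃ S ∈ P, v ∈ S) ∧
    (∀ a b, G.Adj a b → ∀ S ∈ P, a ∈ S → b ∈ S) ∧
    (∀ S ∈ P, ∃ n, 4 ≤ n ∧ Iso (G.induce (· ∈ S)) (cycleGraph n))

/-- Poincaré–Hopf index `i_f(v) = 1 - χ(S^-_f(v))`. -/
noncomputable def pindex (G : FGraph V) (f : V → ℝ) (v : V) : ℤ :=
  1 - ((G.unitSphere v).induce (fun w => f w < f v)).euler

/-- Curvature `K(v) = Σ_{k ≥ 0} (-1)^k f_{k-1}(S(v))/(k+1)` with `f_{-1} = 1`. -/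
noncomputable def curvature (G : FGraph V) (v : V) : ℝ :=
  ∑ k ∈ Finset.range (G.verts.card + 1),
    (-1 : ℝ) ^ k * (if k = 0 then 1 else ((G.unitSphere v).numSimplices k : ℝ)) / (k + 1)

end FGraph

/-- `sign(a + i b) = sign(a) + i sign(b)`. -/
noncomputable def csgn (z : ℂ) : ℂ :=
  ⟨Real.sign z.re, Real.sign z.im⟩

/-- The set `U = {1+i, 1-i, -1+i, -1-i}` of possible values of `csgn`. -/
noncomputable def signU : Finset ℂ :=
  {1 + Complex.I, 1 - Complex.I, -1 + Complex.I, -1 - Complex.I}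

namespace FGraph

variable {V : Type}

/-- The set of values of `sign(ψ - c)` attained on the finite vertex set `x`. -/
noncomputable def signValues (ψ : V → ℂ) (c : ℂ) (x : Finset V) : Finset ℂ :=
  x.image (fun v => csgn (ψ v - c))

/-- The level set `{ψ = c}` of a complex-valued function: the subgraph of the Barycentric
refinement induced by the simplices on which `sign(ψ - c)` takes at least three distinct
values, including `-1+i` and `1-i`. -/
noncomputable def complexLevelSet (G : FGraph V) (ψ : V → ℂ) (c : ℂ) : FGraph (Finset V) :=
  G.barycentric.induce (fun x =>
    3 ≤ (signValues ψ c x).card ∧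
    (-1 + Complex.I) ∈ signValues ψ c x ∧ (1 - Complex.I) ∈ signValues ψ c x)

/-- The level set `{ψ = 0}_e` for a two-element subset `e ⊆ U`: the subgraph of the
Barycentric refinement induced by the simplices on which `sign(ψ)` attains both values
of `e` and at least three distinct values in total. -/
noncomputable def complexLevelSetE (G : FGraph V) (ψ : V → ℂ) (e : Finset ℂ) :
    FGraph (Finset V) :=
  G.barycentric.induce (fun x =>
    (∀ u ∈ e, u ∈ signValues ψ 0 x) ∧ 3 ≤ (signValues ψ 0 x).card)

/-- `Ψ^{-1}(t)`: the subgraph of the Barycentric refinement induced by the simplices on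
which `sign(ψ)` attains all values of `t`. -/
noncomputable def signPreimage (G : FGraph V) (ψ : V → ℂ) (t : Finset ℂ) :
    FGraph (Finset V) :=
  G.barycentric.induce (fun x => ∀ u ∈ t, u ∈ signValues ψ 0 x)

/-- The sign vectors of `F - c` attained on the finite vertex set `x`. -/
noncomputable def vecSignValues {k : ℕ} (F : V → Fin k → ℝ) (c : Fin k → ℝ)
    (x : Finset V) : Finset (Fin k → ℝ) :=
  x.image (fun v j => Real.sign (F v j - c j))

/-- The level set `{F = c}` of an `ℝ^k`-valued function: the subgraph of the Barycentric
refinement induced by the simplices on which the sign vector of `F - c` takes at least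
`k+1` distinct values, including the `k` vectors `(1,…,1,-1,1,…,1)`. -/
noncomputable def vecLevelSet (G : FGraph V) {k : ℕ} (F : V → Fin k → ℝ) (c : Fin k → ℝ) :
    FGraph (Finset V) :=
  G.barycentric.induce (fun x =>
    k + 1 ≤ (vecSignValues F c x).card ∧
    ∀ j : Fin k, (fun i => if i = j then (-1 : ℝ) else 1) ∈ vecSignValues F c x)

end FGraph

/-- The complete graph on `Fin n`. -/
def completeFGraph (n : ℕ) : FGraph (Fin n) where
  verts := Finset.univ
  Adj a b := a ≠ b
  symm h := h.symm
  loopless a h := h rfl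
  mem_of_adj _ := Finset.mem_univ _

/-- Stirling numbers of the second kind. -/
def stirling2 : ℕ → ℕ → ℕ
  | 0, 0 => 1
  | 0, _ + 1 => 0
  | _ + 1, 0 => 0
  | n + 1, m + 1 => (m + 1) * stirling2 n (m + 1) + stirling2 n m

/-!
The simplices of `{ψ = 0}` have at least three vertices, and those of a 3-manifold at most four,
so `{ψ = 0}` consists of triangles and tetrahedra of `G`, adjacent only across the two sizes; in
particular it has no triangles. A triangle `x` lies in exactly two tetrahedra of `G` (its link is a
0-sphere), both of which inherit the sign condition from `x`. A tetrahedron satisfying the sign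
condition has exactly two faces satisfying it, a finite check on the quadrants of `ψ` at its
vertices. So `{ψ = 0}` is a triangle-free graph in which every vertex has exactly two neighbours,
and each of its components is a cycle of length at least four.
-/

namespace FGraph

variable {V : Type}

lemma mem_induce_verts {G : FGraph V} {P : V → Prop} {w : V} :
    w ∈ (G.induce P).verts ↔ w ∈ G.verts ∧ P w :=
  Finset.mem_filter

lemma mem_unitSphere_verts {G : FGraph V} {v w : V} :
    w ∈ (G.unitSphere v).verts ↔ w ∈ G.verts ∧ G.Adj v w :=
  Finset.mem_filter

lemma Contractible.nonempty {G : FGraph V} (h : G.Contractible) : G.verts.Nonempty := by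
  cases h with
  | single G v hv => exact ⟨v, hv ▸ Finset.mem_singleton_self v⟩
  | step G v hv => exact ⟨v, hv⟩

lemma Contractible.exists_verts_eq_singleton {G : FGraph V} (h : G.Contractible)
    (hG : ∀ a b, ¬ G.Adj a b) : ∃ v, G.verts = {v} := by
  cases h with
  | single G v hv => exact ⟨v, hv⟩
  | step G v hv hS =>
    obtain ⟨w, hw⟩ := hS.nonempty
    exact absurd (mem_unitSphere_verts.mp hw).2 (hG v w)

lemma IsManifold.nonneg {d : ℤ} {G : FGraph V} (h : IsManifold d G) : 0 ≤ d := by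
  cases h with
  | intro d hd => exact hd

lemma IsManifold.isSphere_unitSphere {d : ℤ} {G : FGraph V} (h : IsManifold d G) {v : V}
    (hv : v ∈ G.verts) : IsSphere (d - 1) (G.unitSphere v) := by
  cases h with
  | intro d hd G h => exact h v hv

lemma IsSphere.isManifold {d : ℤ} {G : FGraph V} (h : IsSphere d G) (hd : 0 ≤ d) :
    IsManifold d G := by
  cases h with
  | empty => omega
  | punctured d G hm => exact hm

lemma IsSphere.verts_eq_empty {G : FGraph V} (h : IsSphere (-1) G) : G.verts = ∅ := by
  cases h with
  | empty G h => exact h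
  | punctured d G hm => exact absurd hm.nonneg (by norm_num)

lemma IsManifold.not_adj_of_dim_zero {G : FGraph V} (h : IsManifold 0 G) (a b : V) :
    ¬ G.Adj a b := by
  intro hab
  have hS : (G.unitSphere a).verts = ∅ :=
    (h.isSphere_unitSphere (G.mem_of_adj hab)).verts_eq_empty
  have hb : b ∈ (G.unitSphere a).verts :=
    mem_unitSphere_verts.mpr ⟨G.mem_of_adj (G.symm hab), hab⟩
  simp [hS] at hb

/-- Removing a vertex leaves a contractible edgeless graph, hence a single point. -/
lemma IsSphere.exists_verts_eq_pair {G : FGraph V} (h : IsSphere 0 G) :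
    ∃ p q, p ≠ q ∧ G.verts = {p, q} := by
  cases h with
  | punctured d G hm v hv hc =>
    obtain ⟨w, hw⟩ :=
      hc.exists_verts_eq_singleton fun a b hab => hm.not_adj_of_dim_zero a b hab.1
    have hmem : ∀ u, u ∈ G.verts ∧ u ≠ v ↔ u = w := fun u => by
      simpa only [erase, mem_induce_verts, Finset.mem_singleton] using Finset.ext_iff.mp hw u
    refine ⟨v, w, fun hvw => ((hmem w).mpr rfl).2 hvw.symm, ?_⟩
    ext u
    by_cases huv : u = v
    · simp [huv, hv]
    · simp [huv, ← hmem u]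

lemma IsSimplex.unitSphere_erase {G : FGraph V} {x : Finset V} (hx : G.IsSimplex x) {a : V}
    (ha : a ∈ x) (hcard : 1 < x.card) : (G.unitSphere a).IsSimplex (x.erase a) := by
  have hadj : ∀ w ∈ x.erase a, G.Adj a w := fun w hw =>
    hx.2.2 a ha w (Finset.mem_of_mem_erase hw) (Finset.ne_of_mem_erase hw).symm
  refine ⟨?_, fun w hw => ?_, fun u hu w hw huw => ?_⟩
  · rw [← Finset.card_pos, Finset.card_erase_of_mem ha]; omega
  · exact mem_unitSphere_verts.mpr ⟨hx.2.1 (Finset.mem_of_mem_erase hw), hadj w hw⟩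
  · exact ⟨hx.2.2 u (Finset.mem_of_mem_erase hu) w (Finset.mem_of_mem_erase hw) huw,
      hadj u hu, hadj w hw⟩

lemma IsSimplex.insert {G : FGraph V} {x : Finset V} (hx : G.IsSimplex x) {p : V}
    (hp : p ∈ G.verts) (hadj : ∀ u ∈ x, G.Adj u p) : G.IsSimplex (insert p x) := by
  refine ⟨Finset.insert_nonempty p x, Finset.insert_subset_iff.mpr ⟨hp, hx.2.1⟩, ?_⟩
  intro u hu w hw huw
  rcases Finset.mem_insert.mp hu with rfl | hux <;> rcases Finset.mem_insert.mp hw with rfl | hwx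
  · exact absurd rfl huw
  · exact G.symm (hadj w hwx)
  · exact hadj u hux
  · exact hx.2.2 u hux w hwx huw

lemma IsSimplex.mono {G : FGraph V} {x y : Finset V} (hx : G.IsSimplex x) (hyx : y ⊆ x)
    (hy : y.Nonempty) : G.IsSimplex y :=
  ⟨hy, hyx.trans hx.2.1, fun a ha b hb hab => hx.2.2 a (hyx ha) b (hyx hb) hab⟩

lemma IsSimplex.card_le_of_isManifold {d : ℕ} {G : FGraph V} (hG : IsManifold d G)
    {x : Finset V} (hx : G.IsSimplex x) : x.card ≤ d + 1 := by
  induction d generalizing G x with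
  | zero =>
    by_contra! hcard
    obtain ⟨a, ha, b, hb, hab⟩ := Finset.one_lt_card.mp hcard
    exact hG.not_adj_of_dim_zero a b (hx.2.2 a ha b hb hab)
  | succ d ih =>
    obtain ⟨a, ha⟩ := hx.1
    by_cases hcard : x.card ≤ 1
    · omega
    have hS := hG.isSphere_unitSphere (hx.2.1 ha)
    rw [Nat.cast_succ, add_sub_cancel_right] at hS
    have := ih (hS.isManifold (by positivity)) (hx.unitSphere_erase ha (by omega))
    rw [Finset.card_erase_of_mem ha] at this
    omega

/-- Taking unit spheres at the vertices of `x` one at a time ends in a `0`-sphere. -/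
lemma IsManifold.exists_commonNeighbors_eq_pair {d : ℕ} (hd : 1 ≤ d) {G : FGraph V}
    (hG : IsManifold d G) {x : Finset V} (hx : G.IsSimplex x) (hcard : x.card = d) :
    ∃ p q, p ≠ q ∧ ∀ w, (∀ a ∈ x, G.Adj a w) ↔ w = p ∨ w = q := by
  induction d, hd using Nat.le_induction generalizing G x with
  | base =>
    obtain ⟨a, rfl⟩ := Finset.card_eq_one.mp hcard
    have hS := hG.isSphere_unitSphere (hx.2.1 (Finset.mem_singleton_self a))
    obtain ⟨p, q, hpq, hpair⟩ := IsSphere.exists_verts_eq_pair (by simpa using hS)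
    refine ⟨p, q, hpq, fun w => ?_⟩
    have hw := Finset.ext_iff.mp hpair w
    simp only [mem_unitSphere_verts, Finset.mem_insert, Finset.mem_singleton] at hw
    simp only [Finset.mem_singleton, forall_eq, ← hw]
    exact ⟨fun h => ⟨G.mem_of_adj (G.symm h), h⟩, And.right⟩
  | succ d hd ih =>
    obtain ⟨a, ha⟩ := hx.1
    have hS := hG.isSphere_unitSphere (hx.2.1 ha)
    rw [Nat.cast_succ, add_sub_cancel_right] at hS
    obtain ⟨p, q, hpq, hlink⟩ := ih (hS.isManifold (by positivity))
      (hx.unitSphere_erase ha (by omega)) (by rw [Finset.card_erase_of_mem ha]; omega)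
    refine ⟨p, q, hpq, fun w => ?_⟩
    rw [← hlink]
    obtain ⟨b, hb⟩ : (x.erase a).Nonempty := by
      rw [← Finset.card_pos, Finset.card_erase_of_mem ha]; omega
    constructor
    · intro h u hu
      exact ⟨h u (Finset.mem_of_mem_erase hu),
        hx.2.2 a ha u (Finset.mem_of_mem_erase hu) (Finset.ne_of_mem_erase hu).symm, h a ha⟩
    · intro h u hu
      by_cases hua : u = a
      · exact hua ▸ (h b hb).2.2
      · exact (h u (Finset.mem_erase.mpr ⟨hua, hu⟩)).1

end FGraph

namespace SimpleGraph.Walk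

variable {α : Type} {G : SimpleGraph α} {u : α} {p : G.Walk u u}

lemma getVert_mod_length {k : ℕ} (hk : k ≤ p.length) :
    p.getVert (k % p.length) = p.getVert k := by
  rcases hk.lt_or_eq with h | rfl
  · rw [Nat.mod_eq_of_lt h]
  · rw [Nat.mod_self, getVert_length, getVert_zero]

namespace IsCycle

lemma getVert_inj (hp : p.IsCycle) {i j : ℕ} (hi : i < p.length) (hj : j < p.length) :
    p.getVert i = p.getVert j ↔ i = j :=
  ⟨fun h => hp.getVert_injOn' (by simp only [Set.mem_ofPred_eq]; omega)
    (by simp only [Set.mem_ofPred_eq]; omega) h, congrArg _⟩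

lemma adj_getVert_iff [G.LocallyFinite] (hp : p.IsCycle) (hG : G.IsCycles) {i j : ℕ}
    (hi : i < p.length) (hj : j < p.length) :
    G.Adj (p.getVert i) (p.getVert j) ↔
      (i + 1) % p.length = j ∨ (j + 1) % p.length = i := by
  have succ_eq : ∀ {k l}, k < p.length → l < p.length →
      (p.getVert (k + 1) = p.getVert l ↔ (k + 1) % p.length = l) := fun hk hl => by
    rw [← getVert_mod_length hk, hp.getVert_inj (Nat.mod_lt _ (by omega)) hl]
  constructor
  · intro h
    rw [← hp.adj_toSubgraph_iff_of_isCycles hG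
      ((p.mem_verts_toSubgraph).mpr (p.getVert_mem_support i)), toSubgraph_adj_iff] at h
    obtain ⟨k, hk, hkn⟩ := h
    rcases Sym2.eq_iff.mp hk with ⟨hki, hkj⟩ | ⟨hkj, hki⟩
    · rw [hp.getVert_inj hkn hi] at hki
      exact Or.inl (hki ▸ (succ_eq hkn hj).mp hkj)
    · rw [hp.getVert_inj hkn hj] at hkj
      exact Or.inr (hkj ▸ (succ_eq hkn hi).mp hki)
  · rintro (h | h)
    · rw [← (succ_eq hi hj).mpr h]
      exact (p.toSubgraph_adj_getVert hi).adj_sub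
    · rw [← (succ_eq hj hi).mpr h]
      exact (p.toSubgraph_adj_getVert hj).adj_sub.symm

end IsCycle

end SimpleGraph.Walk

namespace FGraph

variable {W : Type}

def IsTwoRegular (H : FGraph W) : Prop :=
  ∀ v ∈ H.verts, ∃ y z, y ≠ z ∧ ∀ w, H.Adj v w ↔ w = y ∨ w = z

def IsTriangleFree (H : FGraph W) : Prop :=
  ∀ a b c, H.Adj a b → H.Adj b c → H.Adj a c → False

/-- Taken on the vertex subtype, so that it is a finite graph. -/
def toSimpleGraph (H : FGraph W) : SimpleGraph H.verts where
  Adj a b := H.Adj a b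
  symm := ⟨fun _ _ => H.symm⟩
  loopless := ⟨fun a => H.loopless a⟩

lemma IsTwoRegular.isCycles {H : FGraph W} (hH : H.IsTwoRegular) :
    H.toSimpleGraph.IsCycles := by
  intro v _
  obtain ⟨y, z, hyz, hnbr⟩ := hH v v.2
  have hy := H.mem_of_adj (H.symm ((hnbr y).mpr (Or.inl rfl)))
  have hz := H.mem_of_adj (H.symm ((hnbr z).mpr (Or.inr rfl)))
  have : H.toSimpleGraph.neighborSet v = {⟨y, hy⟩, ⟨z, hz⟩} := by
    ext w
    simp [toSimpleGraph, hnbr, Subtype.ext_iff]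
  rw [this, Set.ncard_pair (by simpa [Subtype.ext_iff] using hyz)]

lemma iso_cycleGraph_of_bijOn (H : FGraph W) {S : Finset W} (hS : S ⊆ H.verts) {n : ℕ}
    [NeZero n] (f : Fin n → W) (hf : Set.BijOn f Set.univ S)
    (hadj : ∀ i j, H.Adj (f i) (f j) ↔ (cycleGraph n).Adj i j) :
    Iso (H.induce (· ∈ S)) (cycleGraph n) := by
  have hverts : (H.induce (· ∈ S)).verts = S := by
    ext w
    exact mem_induce_verts.trans ⟨And.right, fun h => ⟨hS h, h⟩⟩
  have hinv := hf.invOn_invFunOn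
  refine ⟨Function.invFunOn f Set.univ, ?_, fun a ha b hb => ?_⟩
  · rw [hverts]
    simpa [cycleGraph] using hf.symm hinv.symm
  rw [hverts] at ha hb
  rw [← hadj, hinv.2 ha, hinv.2 hb]
  exact ⟨And.left, fun h => ⟨h, ha, hb⟩⟩

noncomputable def componentVerts {H : FGraph W} (c : H.toSimpleGraph.ConnectedComponent) :
    Finset W :=
  c.supp.toFinset.map (Function.Embedding.subtype _)

lemma mem_componentVerts {H : FGraph W} {c : H.toSimpleGraph.ConnectedComponent} {w : W} :
    w ∈ componentVerts c ↔ ∃ hw : w ∈ H.verts, ⟨w, hw⟩ ∈ c.supp := by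
  simp [componentVerts]

lemma IsTwoRegular.exists_iso_cycleGraph {H : FGraph W} (hH : H.IsTwoRegular)
    (htri : H.IsTriangleFree) (c : H.toSimpleGraph.ConnectedComponent) :
    ∃ n, 4 ≤ n ∧ Iso (H.induce (· ∈ componentVerts c)) (cycleGraph n) := by
  obtain ⟨v, rfl⟩ := c.exists_rep
  obtain ⟨y, z, -, hnbr⟩ := hH v v.2
  obtain ⟨p, hp, hsupp⟩ := hH.isCycles.exists_cycle_toSubgraph_verts_eq_connectedComponentSupp
    (c := H.toSimpleGraph.connectedComponentMk v) rfl
    ⟨⟨y, H.mem_of_adj (H.symm ((hnbr y).mpr (Or.inl rfl)))⟩, (hnbr y).mpr (Or.inl rfl)⟩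
  have mem_supp : ∀ w, w ∈ (H.toSimpleGraph.connectedComponentMk v).supp ↔ w ∈ p.support :=
    fun w => by rw [← hsupp, SimpleGraph.Walk.mem_verts_toSubgraph]
  set n := p.length with hn
  have adj_iff : ∀ {i j}, i < n → j < n → (H.Adj (p.getVert i) (p.getVert j) ↔
      (i + 1) % n = j ∨ (j + 1) % n = i) := hp.adj_getVert_iff hH.isCycles
  have hn4 : 4 ≤ n := by
    rcases (show n = 3 ∨ 4 ≤ n by have := hp.three_le_length; omega) with h3 | h4
    · rw [h3] at adj_iff
      exact (htri _ _ _
        ((adj_iff (i := 0) (j := 1) (by norm_num) (by norm_num)).mpr (by norm_num))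
        ((adj_iff (i := 1) (j := 2) (by norm_num) (by norm_num)).mpr (by norm_num))
        ((adj_iff (i := 0) (j := 2) (by norm_num) (by norm_num)).mpr (by norm_num))).elim
    · exact h4
  have : NeZero n := ⟨by omega⟩
  refine ⟨n, hn4, iso_cycleGraph_of_bijOn H (fun w hw => (mem_componentVerts.mp hw).1)
    (fun i => (p.getVert i).1) ⟨fun i _ => ?_, fun i _ j _ hij => ?_, fun w hw => ?_⟩
    fun i j => ?_⟩
  · exact mem_componentVerts.mpr ⟨_, (mem_supp _).mpr (p.getVert_mem_support i)⟩
  · exact Fin.ext ((hp.getVert_inj i.2 j.2).mp (Subtype.ext hij))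
  · obtain ⟨hwV, hwc⟩ := mem_componentVerts.mp hw
    obtain ⟨k, hk, hkn⟩ :=
      SimpleGraph.Walk.mem_support_iff_exists_getVert.mp ((mem_supp _).mp hwc)
    refine ⟨⟨k % n, Nat.mod_lt _ (by omega)⟩, Set.mem_univ _, ?_⟩
    simp only [hn, SimpleGraph.Walk.getVert_mod_length hkn, hk]
  · change _ ↔ i ≠ j ∧ _
    rw [← adj_iff i.2 j.2]
    exact ⟨fun h => ⟨fun hij => H.loopless _ (hij ▸ h), h⟩, And.right⟩

lemma IsTwoRegular.isDisjointUnionOfCycles {H : FGraph W} (hH : H.IsTwoRegular)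
    (htri : H.IsTriangleFree) : H.IsDisjointUnionOfCycles := by
  refine ⟨(Finset.univ : Finset H.toSimpleGraph.ConnectedComponent).image componentVerts,
    ?_, ?_, ?_, ?_, ?_⟩
  · rintro _ hS w hw
    obtain ⟨c, -, rfl⟩ := Finset.mem_image.mp hS
    exact (mem_componentVerts.mp hw).1
  · rintro _ hS _ hT hST
    obtain ⟨c, -, rfl⟩ := Finset.mem_image.mp hS
    obtain ⟨d, -, rfl⟩ := Finset.mem_image.mp hT
    refine Finset.disjoint_left.mpr fun w hwc hwd => hST ?_
    obtain ⟨_, hwc⟩ := mem_componentVerts.mp hwc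
    obtain ⟨_, hwd⟩ := mem_componentVerts.mp hwd
    exact congrArg componentVerts (hwc.symm.trans hwd)
  · intro v hv
    exact ⟨_, Finset.mem_image_of_mem _ (Finset.mem_univ (H.toSimpleGraph.connectedComponentMk
      ⟨v, hv⟩)), mem_componentVerts.mpr ⟨hv, rfl⟩⟩
  · rintro a b hab _ hS ha
    obtain ⟨c, -, rfl⟩ := Finset.mem_image.mp hS
    obtain ⟨haV, rfl⟩ := mem_componentVerts.mp ha
    have hbV := H.mem_of_adj (H.symm hab)
    exact mem_componentVerts.mpr ⟨hbV,
      SimpleGraph.ConnectedComponent.connectedComponentMk_eq_of_adj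
        (show H.toSimpleGraph.Adj ⟨b, hbV⟩ ⟨a, haV⟩ from H.symm hab)⟩
  · rintro _ hS
    obtain ⟨c, -, rfl⟩ := Finset.mem_image.mp hS
    exact hH.exists_iso_cycleGraph htri c

end FGraph

/-- `true` records a positive part. Where both parts are nonzero this determines `csgn`, and
unlike `ℂ` the type `Bool × Bool` has decidable equality. -/
noncomputable def quadrant (z : ℂ) : Bool × Bool :=
  (decide (0 < z.re), decide (0 < z.im))

def ofQuadrant (s : Bool × Bool) : ℂ :=
  ⟨if s.1 then 1 else -1, if s.2 then 1 else -1⟩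

lemma ofQuadrant_injective : Function.Injective ofQuadrant := by
  rintro ⟨a, b⟩ ⟨c, d⟩ h
  have hre : (if a then (1 : ℝ) else -1) = if c then 1 else -1 := congrArg Complex.re h
  have him : (if b then (1 : ℝ) else -1) = if d then 1 else -1 := congrArg Complex.im h
  clear h
  revert hre him
  cases a <;> cases b <;> cases c <;> cases d <;> norm_num

lemma csgn_eq_ofQuadrant {z : ℂ} (hre : z.re ≠ 0) (him : z.im ≠ 0) :
    csgn z = ofQuadrant (quadrant z) := by
  rcases hre.lt_or_gt with hre | hre <;> rcases him.lt_or_gt with him | him <;>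
    apply Complex.ext <;>
    simp [csgn, ofQuadrant, quadrant, Real.sign_of_neg, Real.sign_of_pos, hre, him,
      not_lt.mpr hre.le, not_lt.mpr him.le]

lemma ofQuadrant_false_true : ofQuadrant (false, true) = -1 + Complex.I := by
  apply Complex.ext <;> simp [ofQuadrant]

lemma ofQuadrant_true_false : ofQuadrant (true, false) = 1 - Complex.I := by
  apply Complex.ext <;> simp [ofQuadrant]

/-- The sign condition defining `{ψ = 0}`: `(false, true)` and `(true, false)` are the quadrants
of `-1 + i` and `1 - i`. -/
def IsZeroCrossing (S : Finset (Bool × Bool)) : Prop :=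
  3 ≤ S.card ∧ (false, true) ∈ S ∧ (true, false) ∈ S

instance : DecidablePred IsZeroCrossing := fun S => by
  unfold IsZeroCrossing; infer_instance

lemma IsZeroCrossing.mono {S T : Finset (Bool × Bool)} (hS : IsZeroCrossing S) (hST : S ⊆ T) :
    IsZeroCrossing T :=
  ⟨hS.1.trans (Finset.card_le_card hST), hST hS.2.1, hST hS.2.2⟩

set_option maxRecDepth 10000 in
/-- If the four quadrants are distinct, the good faces are those omitting the vertices in the
first and third quadrants; otherwise exactly two vertices share a quadrant, and the good faces
are those omitting one of these two. -/
lemma card_filter_isZeroCrossing_erase_fin (τ : Fin 4 → Bool × Bool)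
    (hτ : IsZeroCrossing (Finset.univ.image τ)) :
    (Finset.univ.filter fun i => IsZeroCrossing ((Finset.univ.erase i).image τ)).card = 2 := by
  revert τ
  decide

lemma card_filter_isZeroCrossing_erase {V : Type} {x : Finset V} (hx : x.card = 4)
    (τ : V → Bool × Bool) (hτ : IsZeroCrossing (x.image τ)) :
    (x.filter fun v => IsZeroCrossing ((x.erase v).image τ)).card = 2 := by
  obtain ⟨e, rfl⟩ : ∃ e : Fin 4 ↪ V, Finset.univ.map e = x := by
    refine ⟨(x.equivFinOfCardEq hx).symm.toEmbedding.trans (Function.Embedding.subtype _), ?_⟩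
    ext v
    simp only [Finset.mem_map, Finset.mem_univ, true_and, Function.Embedding.trans_apply,
      Equiv.toEmbedding_apply, Function.Embedding.subtype_apply]
    exact ⟨by rintro ⟨i, rfl⟩; exact Subtype.prop _,
      fun hv => ⟨x.equivFinOfCardEq hx ⟨v, hv⟩, by simp⟩⟩
  have himage : ∀ s : Finset (Fin 4), (s.map e).image τ = s.image (τ ∘ e) := fun s => by
    rw [Finset.map_eq_image, Finset.image_image]
  rw [Finset.filter_map, Finset.card_map]
  simp only [Function.comp_def, ← Finset.map_erase, himage] at hτ ⊢
  exact card_filter_isZeroCrossing_erase_fin _ hτ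

namespace FGraph

variable {V : Type}

lemma signValues_eq_image_ofQuadrant {ψ : V → ℂ} {x : Finset V}
    (hψ : ∀ v ∈ x, (ψ v).re ≠ 0 ∧ (ψ v).im ≠ 0) :
    signValues ψ 0 x = (x.image fun v => quadrant (ψ v)).image ofQuadrant := by
  rw [Finset.image_image]
  refine Finset.image_congr fun v hv => ?_
  simpa using csgn_eq_ofQuadrant (hψ v hv).1 (hψ v hv).2

lemma isZeroCrossing_iff {ψ : V → ℂ} {x : Finset V}
    (hψ : ∀ v ∈ x, (ψ v).re ≠ 0 ∧ (ψ v).im ≠ 0) :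
    IsZeroCrossing (x.image fun v => quadrant (ψ v)) ↔
      3 ≤ (signValues ψ 0 x).card ∧ -1 + Complex.I ∈ signValues ψ 0 x ∧
        1 - Complex.I ∈ signValues ψ 0 x := by
  rw [signValues_eq_image_ofQuadrant hψ, Finset.card_image_of_injective _ ofQuadrant_injective,
    ← ofQuadrant_false_true, ← ofQuadrant_true_false, ofQuadrant_injective.mem_finset_image,
    ofQuadrant_injective.mem_finset_image]
  rfl

lemma mem_barycentric_induce_verts {G : FGraph V} {P : Finset V → Prop} {x : Finset V} :
    x ∈ (G.barycentric.induce P).verts ↔ G.IsSimplex x ∧ P x := by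
  simp only [barycentric, mem_induce_verts, Finset.mem_filter, Finset.mem_powerset]
  exact ⟨fun h => ⟨h.1.2, h.2⟩, fun h => ⟨⟨h.1.2.1, h.1⟩, h.2⟩⟩

lemma barycentric_induce_adj {G : FGraph V} {P : Finset V → Prop} {x y : Finset V} :
    (G.barycentric.induce P).Adj x y ↔
      x ∈ (G.barycentric.induce P).verts ∧ y ∈ (G.barycentric.induce P).verts ∧
        (x ⊂ y ∨ y ⊂ x) := by
  simp only [mem_barycentric_induce_verts]
  exact ⟨fun h => ⟨⟨h.1.1, h.2.1⟩, ⟨h.1.2.1, h.2.2⟩, h.1.2.2⟩,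
    fun h => ⟨⟨h.1.1, h.2.1.1, h.2.2⟩, h.1.2, h.2.1.2⟩⟩

lemma mem_complexLevelSet_verts {G : FGraph V} {ψ : V → ℂ}
    (hψ : ∀ v ∈ G.verts, (ψ v).re ≠ 0 ∧ (ψ v).im ≠ 0) {x : Finset V} :
    x ∈ (G.complexLevelSet ψ 0).verts ↔
      G.IsSimplex x ∧ IsZeroCrossing (x.image fun v => quadrant (ψ v)) := by
  rw [complexLevelSet, mem_barycentric_induce_verts]
  exact and_congr_right fun hx => (isZeroCrossing_iff fun v hv => hψ v (hx.2.1 hv)).symm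

section ThreeManifold

variable {G : FGraph V} {ψ : V → ℂ}

lemma card_mem_complexLevelSet (hG : IsManifold 3 G)
    (hψ : ∀ v ∈ G.verts, (ψ v).re ≠ 0 ∧ (ψ v).im ≠ 0) {x : Finset V}
    (hx : x ∈ (G.complexLevelSet ψ 0).verts) :
    3 ≤ x.card ∧ x.card ≤ 4 := by
  obtain ⟨hs, hc⟩ := (mem_complexLevelSet_verts hψ).mp hx
  exact ⟨hc.1.trans Finset.card_image_le, hs.card_le_of_isManifold (d := 3) hG⟩

lemma complexLevelSet_isTriangleFree (hG : IsManifold 3 G)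
    (hψ : ∀ v ∈ G.verts, (ψ v).re ≠ 0 ∧ (ψ v).im ≠ 0) :
    (G.complexLevelSet ψ 0).IsTriangleFree := by
  intro x y z hxy hyz hxz
  rw [complexLevelSet, barycentric_induce_adj] at hxy hyz hxz
  have card_ne : ∀ {a b : Finset V}, (a ⊂ b ∨ b ⊂ a) → a.card ≠ b.card := by
    rintro a b (h | h)
    · exact (Finset.card_lt_card h).ne
    · exact (Finset.card_lt_card h).ne'
  have := card_mem_complexLevelSet hG hψ hxy.1
  have := card_mem_complexLevelSet hG hψ hxy.2.1
  have := card_mem_complexLevelSet hG hψ hyz.2.1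
  have := card_ne hxy.2.2
  have := card_ne hyz.2.2
  have := card_ne hxz.2.2
  omega

lemma complexLevelSet_adj_iff_of_card_three (hG : IsManifold 3 G)
    (hψ : ∀ v ∈ G.verts, (ψ v).re ≠ 0 ∧ (ψ v).im ≠ 0) {x : Finset V}
    (hx : x ∈ (G.complexLevelSet ψ 0).verts) (hcard : x.card = 3) (w : Finset V) :
    (G.complexLevelSet ψ 0).Adj x w ↔ ∃ r, (∀ a ∈ x, G.Adj a r) ∧ w = insert r x := by
  obtain ⟨hs, hc⟩ := (mem_complexLevelSet_verts hψ).mp hx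
  rw [complexLevelSet, barycentric_induce_adj]
  constructor
  · rintro ⟨-, hw, hxw | hwx⟩
    · have := card_mem_complexLevelSet hG hψ hw
      obtain ⟨r, hrx, rfl⟩ := Finset.exists_eq_insert_iff.mpr
        ⟨hxw.subset, by have := Finset.card_lt_card hxw; omega⟩
      obtain ⟨hws, -⟩ := (mem_complexLevelSet_verts hψ).mp hw
      exact ⟨r, fun a ha => hws.2.2 a (Finset.mem_insert_of_mem ha) r
        (Finset.mem_insert_self r x) (fun h => hrx (h ▸ ha)), rfl⟩
    · have := card_mem_complexLevelSet hG hψ hw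
      have := Finset.card_lt_card hwx
      omega
  · rintro ⟨r, hr, rfl⟩
    obtain ⟨a, ha⟩ := hs.1
    refine ⟨hx, (mem_complexLevelSet_verts hψ).mpr
      ⟨hs.insert (G.mem_of_adj (G.symm (hr a ha))) hr, ?_⟩,
      Or.inl (Finset.ssubset_insert fun hrx => G.loopless r (hr r hrx))⟩
    exact hc.mono (Finset.image_subset_image (Finset.subset_insert r x))

lemma exists_complexLevelSet_adj_iff_of_card_three (hG : IsManifold 3 G)
    (hψ : ∀ v ∈ G.verts, (ψ v).re ≠ 0 ∧ (ψ v).im ≠ 0) {x : Finset V}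
    (hx : x ∈ (G.complexLevelSet ψ 0).verts) (hcard : x.card = 3) :
    ∃ y z, y ≠ z ∧ ∀ w, (G.complexLevelSet ψ 0).Adj x w ↔ w = y ∨ w = z := by
  obtain ⟨hs, -⟩ := (mem_complexLevelSet_verts hψ).mp hx
  obtain ⟨p, q, hpq, hlink⟩ :=
    hG.exists_commonNeighbors_eq_pair (d := 3) (by norm_num) hs hcard
  have hp : ∀ a ∈ x, G.Adj a p := (hlink p).mpr (Or.inl rfl)
  refine ⟨insert p x, insert q x, fun h => ?_, fun w => ?_⟩
  · rcases Finset.mem_insert.mp (h ▸ Finset.mem_insert_self p x) with h | h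
    · exact hpq h
    · exact G.loopless p (hp p h)
  · rw [complexLevelSet_adj_iff_of_card_three hG hψ hx hcard]
    constructor
    · rintro ⟨r, hr, rfl⟩
      rcases (hlink r).mp hr with rfl | rfl <;> simp
    · rintro (rfl | rfl)
      exacts [⟨p, hp, rfl⟩, ⟨q, (hlink q).mpr (Or.inr rfl), rfl⟩]

lemma complexLevelSet_adj_iff_of_card_four (hG : IsManifold 3 G)
    (hψ : ∀ v ∈ G.verts, (ψ v).re ≠ 0 ∧ (ψ v).im ≠ 0) {x : Finset V}
    (hx : x ∈ (G.complexLevelSet ψ 0).verts) (hcard : x.card = 4) (w : Finset V) :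
    (G.complexLevelSet ψ 0).Adj x w ↔
      ∃ v ∈ x, IsZeroCrossing ((x.erase v).image fun u => quadrant (ψ u)) ∧
        w = x.erase v := by
  obtain ⟨hs, -⟩ := (mem_complexLevelSet_verts hψ).mp hx
  rw [complexLevelSet, barycentric_induce_adj]
  constructor
  · rintro ⟨-, hw, hxw | hwx⟩
    · have := card_mem_complexLevelSet hG hψ hw
      have := Finset.card_lt_card hxw
      omega
    · have := card_mem_complexLevelSet hG hψ hw
      obtain ⟨v, hvw, rfl⟩ := Finset.exists_eq_insert_iff.mpr
        ⟨hwx.subset, by have := Finset.card_lt_card hwx; omega⟩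
      refine ⟨v, Finset.mem_insert_self v w, ?_, (Finset.erase_insert hvw).symm⟩
      rw [Finset.erase_insert hvw]
      exact ((mem_complexLevelSet_verts hψ).mp hw).2
  · rintro ⟨v, hv, hcv, rfl⟩
    refine ⟨hx, (mem_complexLevelSet_verts hψ).mpr
      ⟨hs.mono (Finset.erase_subset v x) ?_, hcv⟩, Or.inr (Finset.erase_ssubset hv)⟩
    rw [← Finset.card_pos, Finset.card_erase_of_mem hv]
    omega

lemma exists_complexLevelSet_adj_iff_of_card_four (hG : IsManifold 3 G)
    (hψ : ∀ v ∈ G.verts, (ψ v).re ≠ 0 ∧ (ψ v).im ≠ 0) {x : Finset V}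
    (hx : x ∈ (G.complexLevelSet ψ 0).verts) (hcard : x.card = 4) :
    ∃ y z, y ≠ z ∧ ∀ w, (G.complexLevelSet ψ 0).Adj x w ↔ w = y ∨ w = z := by
  obtain ⟨-, hc⟩ := (mem_complexLevelSet_verts hψ).mp hx
  obtain ⟨a, b, hab, hF⟩ := Finset.card_eq_two.mp
    (card_filter_isZeroCrossing_erase hcard (fun v => quadrant (ψ v)) hc)
  have good_iff : ∀ v,
      (v ∈ x ∧ IsZeroCrossing ((x.erase v).image fun u => quadrant (ψ u))) ↔
        v = a ∨ v = b := fun v => by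
    simpa only [Finset.mem_filter, Finset.mem_insert, Finset.mem_singleton] using
      Finset.ext_iff.mp hF v
  have ha := (good_iff a).mpr (Or.inl rfl)
  have hb := (good_iff b).mpr (Or.inr rfl)
  refine ⟨x.erase a, x.erase b, fun h => hab (x.erase_injOn ha.1 hb.1 h), fun w => ?_⟩
  rw [complexLevelSet_adj_iff_of_card_four hG hψ hx hcard]
  constructor
  · rintro ⟨v, hv, hcv, rfl⟩
    rcases (good_iff v).mp ⟨hv, hcv⟩ with rfl | rfl <;> simp
  · rintro (rfl | rfl)
    exacts [⟨a, ha.1, ha.2, rfl⟩, ⟨b, hb.1, hb.2, rfl⟩]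

lemma complexLevelSet_isTwoRegular (hG : IsManifold 3 G)
    (hψ : ∀ v ∈ G.verts, (ψ v).re ≠ 0 ∧ (ψ v).im ≠ 0) :
    (G.complexLevelSet ψ 0).IsTwoRegular := by
  intro x hx
  have := card_mem_complexLevelSet hG hψ hx
  obtain h3 | h4 : x.card = 3 ∨ x.card = 4 := by omega
  exacts [exists_complexLevelSet_adj_iff_of_card_three hG hψ hx h3,
    exists_complexLevelSet_adj_iff_of_card_four hG hψ hx h4]

end ThreeManifold

end FGraph

/-- If `G` is a 3-manifold and `ψ : V → ℂ` has nowhere-vanishing real and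
imaginary parts on `V`, then the level set `{ψ = 0}` is either the empty graph or a
disjoint union of cyclic graphs `C_n` with `n ≥ 4`. -/
theorem three_manifold_complex_level_set {V : Type} (G : FGraph V)
    (hG : FGraph.IsManifold 3 G) (ψ : V → ℂ)
    (hψ : ∀ v ∈ G.verts, (ψ v).re ≠ 0 ∧ (ψ v).im ≠ 0) :
    (G.complexLevelSet ψ 0).verts = ∅ ∨
      (G.complexLevelSet ψ 0).IsDisjointUnionOfCycles :=
  Or.inr <| (FGraph.complexLevelSet_isTwoRegular hG hψ).isDisjointUnionOfCycles
    (FGraph.complexLevelSet_isTriangleFree hG hψ)
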